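/- Multivariate from univariate decompositions: if each element has a finite expansion X^(j) = Σ_{m=1}^{M_j} ξ_m^(j) φ_m^(j) in orthonormal univariate eigenfunctions, then the positive eigenvalues of the multivariate covariance operator Γ equal the positive eigenvalues of the symmetric block matrix Z ∈ ℝ^{M₊×M₊} (M₊ = Σ_j M_j) with entries Z_{mn}^{(jk)} = Cov(ξ_m^(j), ξ_n^(k)); the corresponding eigenfunctions of Γ have elements ψ_m^(j) = Σ_{n=1}^{M_j} [c_m]_n^(j) φ_n^(j), where c_m are orthonormal eigenvectors of Z, these ψ_m are orthonormal in H, and the multivariate scores are ρ_m = Σ_j Σ_n [c_m]_n^(j) ξ_n^(j). -/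

import Mathlib

open MeasureTheory Matrix

/-!
Everything happens in the span of the `φ_n⁽ʲ⁾`. Writing `c(ψ)` for the coefficient vector
`(⟪φ_n⁽ʲ⁾, ψ⁽ʲ⁾⟫)`, the kernel of `Γ` is `∑ Z_{(k,l),(j,n)} φ_l⁽ᵏ⁾(s) φ_n⁽ʲ⁾(t)`, so `Γψ` is the
expansion of `Z c(ψ)` for every square-integrable `ψ` (`Z` is symmetric). By orthonormality,
expansion `c ↦ ∑ c_n φ_n` is an isometry whose left inverse is `ψ ↦ c(ψ)`. Hence for `ν ≠ 0` an
eigenfunction `ψ = ν⁻¹ Γψ` lies in the span and `c(ψ)` is an eigenvector of `Z`, and conversely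
the expansion of an eigenvector of `Z` is an eigenfunction of `Γ`.
-/

section OrthonormalFamily

variable {ι α : Type*} [Fintype ι] [MeasurableSpace α] {μ : Measure α} {φ : ι → α → ℝ}

theorem integral_sum_mul_mul (hφ : ∀ n, MemLp (φ n) 2 μ) {g : α → ℝ} (hg : MemLp g 2 μ)
    (a : ι → ℝ) : ∫ t, (∑ n, a n * φ n t) * g t ∂μ = ∑ n, a n * ∫ t, φ n t * g t ∂μ := by
  simp_rw [Finset.sum_mul, mul_assoc]
  rw [integral_finsetSum (f := fun n t => a n * (φ n t * g t)) _
    fun n _ => ((hφ n).integrable_mul hg).const_mul (a n)]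
  simp_rw [integral_const_mul]

variable [DecidableEq ι]

theorem integral_mul_sum_of_orthonormal (hφ : ∀ n, MemLp (φ n) 2 μ)
    (horth : ∀ m n, ∫ t, φ m t * φ n t ∂μ = if m = n then 1 else 0) (b : ι → ℝ) (m : ι) :
    ∫ t, φ m t * ∑ n, b n * φ n t ∂μ = b m := by
  simp_rw [mul_comm (φ m _)]
  rw [integral_sum_mul_mul hφ (hφ m)]
  simp [horth]

theorem integral_sum_mul_sum_of_orthonormal (hφ : ∀ n, MemLp (φ n) 2 μ)
    (horth : ∀ m n, ∫ t, φ m t * φ n t ∂μ = if m = n then 1 else 0) (a b : ι → ℝ) :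
    ∫ t, (∑ n, a n * φ n t) * (∑ n, b n * φ n t) ∂μ = ∑ n, a n * b n := by
  rw [integral_sum_mul_mul hφ (memLp_finsetSum _ fun n _ => (hφ n).const_mul (b n))]
  simp_rw [integral_mul_sum_of_orthonormal hφ horth]

end OrthonormalFamily

noncomputable section Multivariate

variable {κ : Type*} {M : κ → Type*} {T : κ → Type*} (φ : ∀ j, M j → T j → ℝ)

section Expansion

variable [∀ j, Fintype (M j)]

def expansion (c : (Σ j, M j) → ℝ) (j : κ) (t : T j) : ℝ :=
  ∑ n, c ⟨j, n⟩ * φ j n t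

def covKernel (Z : Matrix (Σ j, M j) (Σ j, M j) ℝ) (k j : κ) (s : T k) (t : T j) : ℝ :=
  ∑ l, ∑ n, Z ⟨k, l⟩ ⟨j, n⟩ * φ k l s * φ j n t

theorem expansion_smul (a : ℝ) (c : (Σ j, M j) → ℝ) (j : κ) (t : T j) :
    expansion φ (a • c) j t = a * expansion φ c j t := by
  simp only [expansion, Pi.smul_apply, smul_eq_mul, Finset.mul_sum, mul_assoc]

end Expansion

variable [∀ j, MeasurableSpace (T j)] (μ : ∀ j, Measure (T j))

def coeffs (ψ : ∀ j, T j → ℝ) : (Σ j, M j) → ℝ :=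
  fun i => ∫ t, φ i.1 i.2 t * ψ i.1 t ∂μ i.1

def kernelOp [Fintype κ] (K : ∀ k j, T k → T j → ℝ) (ψ : ∀ j, T j → ℝ) (j : κ) (t : T j) : ℝ :=
  ∑ k, ∫ s, K k j s t * ψ k s ∂μ k

variable {φ}

theorem coeffs_const_mul (a : ℝ) (ψ : ∀ j, T j → ℝ) :
    coeffs φ μ (fun j t => a * ψ j t) = a • coeffs φ μ ψ := by
  ext i
  simp only [coeffs, Pi.smul_apply, smul_eq_mul, mul_left_comm _ a, integral_const_mul]

variable [∀ j, Fintype (M j)] (hφ : ∀ j n, MemLp (φ j n) 2 (μ j))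
include hφ

theorem memLp_expansion (c : (Σ j, M j) → ℝ) (j : κ) :
    MemLp (expansion φ c j) 2 (μ j) :=
  memLp_finsetSum _ fun n _ => (hφ j n).const_mul _

theorem kernelOp_covKernel [Fintype κ]
    (Z : Matrix (Σ j, M j) (Σ j, M j) ℝ) {ψ : ∀ j, T j → ℝ} (hψ : ∀ j, MemLp (ψ j) 2 (μ j)) :
    kernelOp μ (covKernel φ Z) ψ = expansion φ (coeffs φ μ ψ ᵥ* Z) := by
  ext j t
  have hK : ∀ k (s : T k),
      covKernel φ Z k j s t = ∑ l, (∑ n, Z ⟨k, l⟩ ⟨j, n⟩ * φ j n t) * φ k l s := by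
    intro k s
    simp only [covKernel, Finset.sum_mul]
    exact Finset.sum_congr rfl fun l _ => Finset.sum_congr rfl fun n _ => by ring
  simp only [kernelOp, hK]
  simp_rw [integral_sum_mul_mul (hφ _) (hψ _)]
  simp only [expansion, vecMul, dotProduct, Fintype.sum_sigma, Finset.sum_mul, coeffs]
  conv_rhs => rw [Finset.sum_comm]
  refine Finset.sum_congr rfl fun k _ => ?_
  rw [Finset.sum_comm]
  exact Finset.sum_congr rfl fun n _ => Finset.sum_congr rfl fun l _ => by ring

theorem kernelOp_covKernel_of_isSymm [Fintype κ] {Z : Matrix (Σ j, M j) (Σ j, M j) ℝ}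
    (hZ : Z.IsSymm) {ψ : ∀ j, T j → ℝ} (hψ : ∀ j, MemLp (ψ j) 2 (μ j)) :
    kernelOp μ (covKernel φ Z) ψ = expansion φ (Z *ᵥ coeffs φ μ ψ) := by
  rw [kernelOp_covKernel μ hφ Z hψ, ← mulVec_transpose, hZ.eq]

variable [∀ j, DecidableEq (M j)]
  (horth : ∀ j m n, ∫ t, φ j m t * φ j n t ∂μ j = if m = n then 1 else 0)
include horth

theorem coeffs_expansion (c : (Σ j, M j) → ℝ) : coeffs φ μ (expansion φ c) = c := by
  ext ⟨j, n⟩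
  exact integral_mul_sum_of_orthonormal (hφ j) (horth j) _ n

theorem sum_integral_expansion_mul_expansion [Fintype κ] (c c' : (Σ j, M j) → ℝ) :
    ∑ j, ∫ t, expansion φ c j t * expansion φ c' j t ∂μ j = c ⬝ᵥ c' := by
  rw [dotProduct, Fintype.sum_sigma]
  exact Finset.sum_congr rfl fun j _ => integral_sum_mul_sum_of_orthonormal (hφ j) (horth j) _ _

variable [Fintype κ] {Z : Matrix (Σ j, M j) (Σ j, M j) ℝ} (hZ : Z.IsSymm)
include hZ

theorem kernelOp_covKernel_expansion (c : (Σ j, M j) → ℝ) :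
    kernelOp μ (covKernel φ Z) (expansion φ c) = expansion φ (Z *ᵥ c) := by
  rw [kernelOp_covKernel_of_isSymm μ hφ hZ (memLp_expansion μ hφ c), coeffs_expansion μ hφ horth]

theorem exists_eigenfunction_iff_exists_eigenvector {ν : ℝ} (hν : ν ≠ 0) :
    (∃ ψ : ∀ j, T j → ℝ, (∀ j, MemLp (ψ j) 2 (μ j)) ∧ ∑ j, ∫ t, ψ j t ^ 2 ∂μ j ≠ 0 ∧
        ∀ j t, kernelOp μ (covKernel φ Z) ψ j t = ν * ψ j t) ↔
      ∃ c, c ≠ 0 ∧ Z *ᵥ c = ν • c := by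
  constructor
  · rintro ⟨ψ, hψ, hψ_ne, heig⟩
    have hexp : (fun j t => ν * ψ j t) = expansion φ (Z *ᵥ coeffs φ μ ψ) := by
      ext j t
      rw [← heig, kernelOp_covKernel_of_isSymm μ hφ hZ hψ]
    refine ⟨coeffs φ μ ψ, fun hc => hψ_ne ?_, ?_⟩
    · have hψ0 : ∀ j t, ψ j t = 0 := fun j t => by
        simpa [hν, hc, expansion] using congrFun₂ hexp j t
      simp [hψ0]
    · rw [← coeffs_const_mul, hexp, coeffs_expansion μ hφ horth]
  · rintro ⟨c, hc, hZc⟩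
    refine ⟨expansion φ c, memLp_expansion μ hφ c, ?_, fun j t => ?_⟩
    · simp_rw [sq, sum_integral_expansion_mul_expansion μ hφ horth]
      exact dotProduct_self_eq_zero.not.mpr hc
    · rw [kernelOp_covKernel_expansion μ hφ horth hZ, hZc, expansion_smul]

end Multivariate

theorem multivariate_from_univariate_KL_general
    (p : ℕ) (T : Fin p → Type*) [∀ j, MeasurableSpace (T j)]
    (μ : ∀ j, Measure (T j))
    (Ω : Type*) [MeasureSpace Ω]
    (Mdim : Fin p → ℕ)
    (φ : ∀ j, Fin (Mdim j) → T j → ℝ)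
    (ξ : ∀ j, Fin (Mdim j) → Ω → ℝ)
    (X : ∀ j, Ω → T j → ℝ)
    (hX : ∀ j ω (t : T j), X j ω t = ∑ m, ξ j m ω * φ j m t)
    (hφ2 : ∀ j m, MemLp (φ j m) 2 (μ j))
    (hφorth : ∀ j m n, ∫ t, φ j m t * φ j n t ∂ μ j = if m = n then 1 else 0)
    (C : ∀ j k, T j → T k → ℝ)
    (hC : ∀ j k (s : T j) (t : T k),
      C j k s t = ∑ l, ∑ n, (∫ ω, ξ j l ω * ξ k n ω) * φ j l s * φ k n t)
    (Z : Matrix ((j : Fin p) × Fin (Mdim j)) ((j : Fin p) × Fin (Mdim j)) ℝ)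
    (hZ : ∀ i i', Z i i' = ∫ ω, ξ i.1 i.2 ω * ξ i'.1 i'.2 ω) :
    -- (1) positive eigenvalues of `Γ` are exactly positive eigenvalues of `Z`
    (∀ ν : ℝ, 0 < ν →
      ((∃ ψ : ∀ j, T j → ℝ, (∀ j, MemLp (ψ j) 2 (μ j)) ∧
          (∑ j, ∫ t, (ψ j t) ^ 2 ∂ μ j) ≠ 0 ∧
          ∀ j (t : T j), ∑ k, ∫ s, C k j s t * ψ k s ∂ μ k = ν * ψ j t) ↔
        (∃ c : (j : Fin p) × Fin (Mdim j) → ℝ, c ≠ 0 ∧ Z.mulVec c = ν • c))) ∧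
    -- (2) assembled eigenfunctions satisfy the eigen-equation of `Γ`
    (∀ (ν : ℝ) (c : (j : Fin p) × Fin (Mdim j) → ℝ), 0 < ν → Z.mulVec c = ν • c →
      ∀ j (t : T j),
        ∑ k, ∫ s, C k j s t * (∑ n, c ⟨k, n⟩ * φ k n s) ∂ μ k
          = ν * ∑ n, c ⟨j, n⟩ * φ j n t) ∧
    -- (3) `⟪ψ_c, ψ_{c'}⟫ = cᵀ c'`: orthonormal eigenvectors give orthonormal eigenfunctions
    (∀ c c' : (j : Fin p) × Fin (Mdim j) → ℝ,
      ∑ j, ∫ t, (∑ n, c ⟨j, n⟩ * φ j n t) * (∑ n, c' ⟨j, n⟩ * φ j n t) ∂ μ j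
        = ∑ i, c i * c' i) ∧
    -- (4) the multivariate scores `ρ = ⟪X, ψ_c⟫`
    (∀ (c : (j : Fin p) × Fin (Mdim j) → ℝ) (ω : Ω),
      ∑ j, ∫ t, X j ω t * (∑ n, c ⟨j, n⟩ * φ j n t) ∂ μ j
        = ∑ i : (j : Fin p) × Fin (Mdim j), c i * ξ i.1 i.2 ω) := by
  have hZ_symm : Z.IsSymm := IsSymm.ext fun i i' => by simp only [hZ, mul_comm]
  obtain rfl : C = covKernel φ Z := by
    funext k j s t
    simp only [hC, hZ, covKernel]
  refine ⟨fun ν hν => exists_eigenfunction_iff_exists_eigenvector μ hφ2 hφorth hZ_symm hν.ne',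
    fun ν c _ hc j t => ?_, sum_integral_expansion_mul_expansion μ hφ2 hφorth, fun c ω => ?_⟩
  · show kernelOp μ (covKernel φ Z) (expansion φ c) j t = ν * expansion φ c j t
    rw [kernelOp_covKernel_expansion μ hφ2 hφorth hZ_symm, hc, expansion_smul]
  · simp_rw [hX]
    exact (sum_integral_expansion_mul_expansion μ hφ2 hφorth (fun i => ξ i.1 i.2 ω) c).trans
      (dotProduct_comm _ _)

/-- Multivariate FPCA from finite univariate Karhunen–Loève expansions
`X⁽ʲ⁾ = ∑_{m<M_j} ξ_m⁽ʲ⁾ φ_m⁽ʲ⁾` with orthonormal `φ_m⁽ʲ⁾`: with the block score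
covariance matrix `Z` (`Z_{mn}^{(jk)} = Cov(ξ_m⁽ʲ⁾, ξ_n⁽ᵏ⁾)`),
(1) `ν > 0` is an eigenvalue of the multivariate covariance operator `Γ` iff it is
an eigenvalue of `Z`;
(2) for an eigenvector `c` of `Z` with eigenvalue `ν > 0`, the function with
elements `ψ⁽ʲ⁾ = ∑_n [c]_n⁽ʲ⁾ φ_n⁽ʲ⁾` satisfies the eigen-equation of `Γ`;
(3) `⟪ψ_c, ψ_{c'}⟫ = cᵀc'`, so orthonormal eigenvectors yield orthonormal
eigenfunctions; and
(4) the multivariate scores are `ρ = ⟪X, ψ_c⟫ = ∑_j ∑_n [c]_n⁽ʲ⁾ ξ_n⁽ʲ⁾`. -/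
theorem multivariate_from_univariate_KL
    (p : ℕ) (T : Fin p → Type*) [∀ j, MeasurableSpace (T j)]
    (μ : ∀ j, Measure (T j))
    (Ω : Type*) [MeasureSpace Ω] [IsProbabilityMeasure (volume : Measure Ω)]
    (Mdim : Fin p → ℕ)
    (φ : ∀ j, Fin (Mdim j) → T j → ℝ)
    (ξ : ∀ j, Fin (Mdim j) → Ω → ℝ)
    (X : ∀ j, Ω → T j → ℝ)
    (hX : ∀ j ω (t : T j), X j ω t = ∑ m, ξ j m ω * φ j m t)
    (hφ2 : ∀ j m, MemLp (φ j m) 2 (μ j))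
    (hφorth : ∀ j m n, ∫ t, φ j m t * φ j n t ∂ μ j = if m = n then 1 else 0)
    (hξ2 : ∀ j m, MemLp (ξ j m) 2 (volume : Measure Ω))
    (hξmean : ∀ j m, ∫ ω, ξ j m ω = 0)
    (C : ∀ j k, T j → T k → ℝ)
    (hC : ∀ j k (s : T j) (t : T k),
      C j k s t = ∑ l, ∑ n, (∫ ω, ξ j l ω * ξ k n ω) * φ j l s * φ k n t)
    (Z : Matrix ((j : Fin p) × Fin (Mdim j)) ((j : Fin p) × Fin (Mdim j)) ℝ)
    (hZ : ∀ i i', Z i i' = ∫ ω, ξ i.1 i.2 ω * ξ i'.1 i'.2 ω) :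
    -- (1) positive eigenvalues of `Γ` are exactly positive eigenvalues of `Z`
    (∀ ν : ℝ, 0 < ν →
      ((∃ ψ : ∀ j, T j → ℝ, (∀ j, MemLp (ψ j) 2 (μ j)) ∧
          (∑ j, ∫ t, (ψ j t) ^ 2 ∂ μ j) ≠ 0 ∧
          ∀ j (t : T j), ∑ k, ∫ s, C k j s t * ψ k s ∂ μ k = ν * ψ j t) ↔
        (∃ c : (j : Fin p) × Fin (Mdim j) → ℝ, c ≠ 0 ∧ Z.mulVec c = ν • c))) ∧
    -- (2) assembled eigenfunctions satisfy the eigen-equation of `Γ`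
    (∀ (ν : ℝ) (c : (j : Fin p) × Fin (Mdim j) → ℝ), 0 < ν → Z.mulVec c = ν • c →
      ∀ j (t : T j),
        ∑ k, ∫ s, C k j s t * (∑ n, c ⟨k, n⟩ * φ k n s) ∂ μ k
          = ν * ∑ n, c ⟨j, n⟩ * φ j n t) ∧
    -- (3) `⟪ψ_c, ψ_{c'}⟫ = cᵀ c'`: orthonormal eigenvectors give orthonormal eigenfunctions
    (∀ c c' : (j : Fin p) × Fin (Mdim j) → ℝ,
      ∑ j, ∫ t, (∑ n, c ⟨j, n⟩ * φ j n t) * (∑ n, c' ⟨j, n⟩ * φ j n t) ∂ μ j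
        = ∑ i, c i * c' i) ∧
    -- (4) the multivariate scores `ρ = ⟪X, ψ_c⟫`
    (∀ (c : (j : Fin p) × Fin (Mdim j) → ℝ) (ω : Ω),
      ∑ j, ∫ t, X j ω t * (∑ n, c ⟨j, n⟩ * φ j n t) ∂ μ j
        = ∑ i : (j : Fin p) × Fin (Mdim j), c i * ξ i.1 i.2 ω) :=
  multivariate_from_univariate_KL_general p T μ Ω Mdim φ ξ X hX hφ2 hφorth C hC Z hZ
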